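/- arXiv:cs/0302010 — 3 statements merged into one kernel-verified Lean document; each statement's English description precedes it below -/
import Mathlib

section
/- Let 1 ≤ i ≤ n and define the greedy traversal from i to n as in the skip-list traversal rule (each hop from j has length 2^l where l is the largest natural number with 2^l dividing j and j + 2^l ≤ n). Then the number of hops in the traversal from i to n is at most 2 * (⌊log₂ n⌋ + 1). -/
/-- The greedy hop level at element `j` towards destination `n`. -/
def hopLevel (j n : ℕ) : ℕ :=
  Nat.findGreatest (fun l => 2 ^ l ∣ j ∧ j + 2 ^ l ≤ n) n

/-- The greedy skip-list traversal from `j` to `n`, computed with explicit fuel. -/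
def greedyAux : ℕ → ℕ → ℕ → List ℕ
  | 0, j, _ => [j]
  | fuel + 1, j, n => if j < n then j :: greedyAux fuel (j + 2 ^ hopLevel j n) n else [j]

/-- The greedy skip-list traversal path from `i` to `n`. -/
def greedy (i n : ℕ) : List ℕ := greedyAux (n - i) i n

lemma hopLevel_spec {j n : ℕ} (h : j < n) :
    2 ^ hopLevel j n ∣ j ∧ j + 2 ^ hopLevel j n ≤ n :=
  Nat.findGreatest_spec (P := fun l => 2 ^ l ∣ j ∧ j + 2 ^ l ≤ n)
    (Nat.zero_le n) ⟨by simp, by simpa using h⟩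

lemma hopLevel_max {j n l : ℕ} (hd : 2 ^ l ∣ j) (hle : j + 2 ^ l ≤ n) :
    l ≤ hopLevel j n := by
  apply Nat.le_findGreatest _ ⟨hd, hle⟩
  have : l < n := calc l < 2 ^ l := Nat.lt_two_pow_self
    _ ≤ j + 2 ^ l := Nat.le_add_left _ _
    _ ≤ n := hle
  omega

lemma hopLevel_succ {j n : ℕ} (hd : 2 ^ (hopLevel j n + 1) ∣ j) :
    n < j + 2 ^ (hopLevel j n + 1) := by
  by_contra h
  push_neg at h
  exact absurd (hopLevel_max hd h) (by omega)

/-- Down phase: once `2^e ∣ j` and `n < j + 2^e`, the remaining path has at most `e` hops. -/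
lemma lemB (n : ℕ) : ∀ e fuel j, 2 ^ e ∣ j → n < j + 2 ^ e →
    (greedyAux fuel j n).length ≤ e + 1 := by
  intro e
  induction e using Nat.strong_induction_on with
  | _ e ih =>
    intro fuel j hd hlt
    cases fuel with
    | zero => simp [greedyAux]
    | succ fuel =>
      rw [greedyAux]
      split
      · next hjn =>
        obtain ⟨hdl, hle⟩ := hopLevel_spec hjn
        have hlte : hopLevel j n < e := by
          have h2 : (2:ℕ) ^ hopLevel j n < 2 ^ e := by omega
          exact (Nat.pow_lt_pow_iff_right (by norm_num)).mp h2
        have hdl1 : (2:ℕ) ^ (hopLevel j n + 1) ∣ j := dvd_trans (pow_dvd_pow 2 hlte) hd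
        have hmax := hopLevel_succ hdl1
        have hrec : (greedyAux fuel (j + 2 ^ hopLevel j n) n).length ≤ hopLevel j n + 1 := by
          apply ih (hopLevel j n) hlte fuel
          · exact Dvd.dvd.add hdl dvd_rfl
          · rw [pow_succ] at hmax; omega
        simp only [List.length_cons]
        omega
      · simp

/-- Up phase. -/
lemma lemA (n : ℕ) : ∀ d k fuel j, 1 ≤ j → 2 ^ k ∣ j → j ≤ n →
    Nat.log 2 n + 1 ≤ k + d →
    (greedyAux fuel j n).length ≤ d + (Nat.log 2 n + 1) := by
  intro d
  induction d with
  | zero =>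
    intro k fuel j hj hd hjn hk
    exfalso
    have h2 : 2 ^ k ≤ n := le_trans (Nat.le_of_dvd hj hd) hjn
    have hlog : k ≤ Nat.log 2 n :=
      (Nat.le_log_iff_pow_le (by norm_num) (by omega)).mpr h2
    omega
  | succ d ih =>
    intro k fuel j hj hd hjn hk
    cases fuel with
    | zero => simp [greedyAux]; omega
    | succ fuel =>
      rw [greedyAux]
      split
      · next hjn' =>
        obtain ⟨hdl, hle⟩ := hopLevel_spec hjn'
        generalize hL : hopLevel j n = L at hdl hle ⊢
        have hllog : L ≤ Nat.log 2 n := by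
          rw [Nat.le_log_iff_pow_le (by norm_num) (by omega)]
          exact le_trans (Nat.le_of_dvd hj hdl) hjn
        by_cases hc : 2 ^ (L + 1) ∣ j
        · -- down phase begins
          have hmax : n < j + 2 ^ (L + 1) := by
            have h := hopLevel_succ (j := j) (n := n) (by rw [hL]; exact hc)
            rwa [hL] at h
          have hB : (greedyAux fuel (j + 2 ^ L) n).length ≤ L + 1 := by
            apply lemB n L fuel
            · exact Dvd.dvd.add hdl dvd_rfl
            · rw [pow_succ] at hmax; omega
          simp only [List.length_cons]
          omega
        · -- valuation increases
          have hkl : k ≤ L := by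
            by_contra hkl
            push_neg at hkl
            exact hc (dvd_trans (pow_dvd_pow 2 hkl) hd)
          obtain ⟨m, hm⟩ := hdl
          have hmodd : ¬ 2 ∣ m := by
            rintro ⟨t, ht⟩
            apply hc
            rw [hm, ht, pow_succ]
            exact ⟨t, by ring⟩
          have h2m1 : 2 ∣ m + 1 := by omega
          have hd' : 2 ^ (L + 1) ∣ j + 2 ^ L := by
            obtain ⟨t, ht⟩ := h2m1
            refine ⟨t, ?_⟩
            rw [hm, pow_succ]
            calc 2 ^ L * m + 2 ^ L = 2 ^ L * (m + 1) := by ring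
              _ = 2 ^ L * (2 * t) := by rw [ht]
              _ = 2 ^ L * 2 * t := by ring
          have hrec : (greedyAux fuel (j + 2 ^ L) n).length
              ≤ d + (Nat.log 2 n + 1) :=
            ih (L + 1) fuel (j + 2 ^ L) (by omega) hd' hle (by omega)
          simp only [List.length_cons]
          omega
      · simp
        omega


/-- The number of hops in the greedy traversal from `i` to `n` is at most
`2 * (⌊log₂ n⌋ + 1)`. -/
theorem stmt3 (i n : ℕ) (h1 : 1 ≤ i) (h2 : i ≤ n) :
    (greedy i n).length - 1 ≤ 2 * (Nat.log 2 n + 1) := by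
  have h := lemA n (Nat.log 2 n + 1) 0 (n - i) i h1 (by simp) h2 (by omega)
  unfold greedy
  omega
end

section
/- Let i < j be positive integers. Let A be a traversal path (a strictly increasing sequence of indices where each hop from index m has length 2^l with 2^l dividing m) that contains i and contains some element ≥ j. Let B be any traversal path that starts at some index ≤ i and contains j. Then A and B share a common element in the closed interval [i, j]; in particular, the last element of A that is ≤ j lies on B. -/
/-- A single skip-list hop: `b = a + 2 ^ l` for some level `l` with `2 ^ l ∣ a`. -/
def isHop (a b : ℕ) : Prop := ∃ l : ℕ, 2 ^ l ∣ a ∧ b = a + 2 ^ l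

/-- A valid traversal path: a list of indices in which each consecutive pair is a hop. -/
def IsPath (P : List ℕ) : Prop := P.Chain' isHop

lemma isHop_lt {a b : ℕ} (h : isHop a b) : a < b := by
  obtain ⟨l, _, rfl⟩ := h
  have : 0 < 2 ^ l := Nat.pow_pos (by norm_num)
  omega

lemma path_pairwise {L : List ℕ} (h : IsPath L) : L.Pairwise (· < ·) :=
  List.isChain_iff_pairwise.mp (List.IsChain.imp (fun _ _ hh => isHop_lt hh) h)

lemma head_le_mem {L : List ℕ} (hL : IsPath L) {y j : ℕ} (hy : L.head? = some y)
    (hj : j ∈ L) : y ≤ j := by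
  cases L with
  | nil => simp at hj
  | cons x t =>
    simp only [List.head?_cons, Option.some.injEq] at hy
    subst hy
    have hp := path_pairwise hL
    rcases List.mem_cons.mp hj with rfl | h
    · exact le_rfl
    · exact le_of_lt ((List.pairwise_cons.mp hp).1 _ h)

/-- Crossing lemma: a path starting at or below `m` that contains `j` must contain `m`,
where `m` is the multiple of `2 ^ l` with `m ≤ j < m + 2 ^ l`. -/
lemma cross {m j l : ℕ} (hm : 2 ^ l ∣ m) (hmj : m ≤ j) (hjm : j < m + 2 ^ l) :
    ∀ (B : List ℕ), IsPath B → ∀ b0, B.head? = some b0 → b0 ≤ m → j ∈ B → m ∈ B := by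
  intro B
  induction B with
  | nil => intro _ _ _ _ h; simp at h
  | cons x t ih =>
    intro hB b0 hb0 hb0m hjB
    simp only [List.head?_cons, Option.some.injEq] at hb0
    subst hb0
    by_cases hxm : x = m
    · exact hxm ▸ List.mem_cons_self
    · have hx : x < m := lt_of_le_of_ne hb0m hxm
      have hjt : j ∈ t := by
        rcases List.mem_cons.mp hjB with rfl | h
        · omega
        · exact h
      cases t with
      | nil => simp at hjt
      | cons y t' =>
        have hhop : isHop x y := (List.isChain_cons_cons.mp hB).1
        have htpath : IsPath (y :: t') := (List.isChain_cons_cons.mp hB).2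
        obtain ⟨k, hk, rfl⟩ := hhop
        by_cases hym : x + 2 ^ k ≤ m
        · exact List.mem_cons_of_mem _ (ih htpath _ rfl hym hjt)
        · exfalso
          push_neg at hym
          have hyj : x + 2 ^ k ≤ j := head_le_mem htpath rfl hjt
          rcases le_or_gt l k with hlk | hkl
          · have h1 : 2 ^ l ∣ x + 2 ^ k := by
              have h2 : (2:ℕ) ^ l ∣ 2 ^ k := pow_dvd_pow 2 hlk
              exact Nat.dvd_add (h2.trans hk) h2
            have h3 : 2 ^ l ∣ (x + 2 ^ k) - m := Nat.dvd_sub h1 hm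
            have h4 : 2 ^ l ≤ (x + 2 ^ k) - m := Nat.le_of_dvd (by omega) h3
            omega
          · have h2 : 2 ^ k ∣ m := (pow_dvd_pow 2 hkl.le).trans hm
            have h3 : 2 ^ k ∣ m - x := Nat.dvd_sub h2 hk
            have h4 : 2 ^ k ≤ m - x := Nat.le_of_dvd (by omega) h3
            omega

lemma next_elem : ∀ (L : List ℕ), IsPath L → ∀ m a : ℕ, m ∈ L → a ∈ L → m < a →
    ∃ m2 ∈ L, isHop m m2 := by
  intro L
  induction L with
  | nil => intro _ _ _ hm; simp at hm
  | cons x t ih =>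
    intro hL m a hm ha hma
    have hp := path_pairwise hL
    rcases List.mem_cons.mp hm with rfl | hmt
    · have hat : a ∈ t := by
        rcases List.mem_cons.mp ha with rfl | h
        · omega
        · exact h
      cases t with
      | nil => simp at hat
      | cons y t' =>
        exact ⟨y, List.mem_cons_of_mem _ (List.mem_cons_self),
          (List.isChain_cons_cons.mp hL).1⟩
    · have hat : a ∈ t := by
        rcases List.mem_cons.mp ha with rfl | h
        · exact absurd ((List.pairwise_cons.mp hp).1 m hmt) (by omega)
        · exact h
      obtain ⟨m2, hm2, hhop⟩ := ih hL.tail m a hmt hat hma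
      exact ⟨m2, List.mem_cons_of_mem _ hm2, hhop⟩

/-- Common elements of parallel paths: if path `A` contains `i` and reaches `j` or beyond,
and path `B` starts at or before `i` and contains `j`, then `A` and `B` share an element
in `[i, j]`; in particular the last element of `A` that is `≤ j` lies on `B`. -/
theorem stmt5 (i j : ℕ) (hi : 0 < i) (hij : i < j)
    (A B : List ℕ) (hA : IsPath A) (hB : IsPath B)
    (hiA : i ∈ A) (hAj : ∃ a ∈ A, j ≤ a)
    (hBstart : ∃ b, B.head? = some b ∧ b ≤ i) (hjB : j ∈ B) :
    (∃ m, m ∈ A ∧ m ∈ B ∧ i ≤ m ∧ m ≤ j) ∧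
    ∀ m ∈ A, m ≤ j → (∀ m' ∈ A, m' ≤ j → m' ≤ m) → m ∈ B := by
  obtain ⟨b0, hb0, hb0i⟩ := hBstart
  have part2 : ∀ m ∈ A, m ≤ j → (∀ m' ∈ A, m' ≤ j → m' ≤ m) → m ∈ B := by
    intro m hmA hmj hmax
    rcases eq_or_lt_of_le hmj with rfl | hmlt
    · exact hjB
    · obtain ⟨a, haA, hja⟩ := hAj
      have hma : m < a := lt_of_lt_of_le hmlt hja
      obtain ⟨m2, hm2A, hhop⟩ := next_elem A hA m a hmA haA hma
      obtain ⟨l, hl, rfl⟩ := hhop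
      have hjm2 : j < m + 2 ^ l := by
        by_contra h
        push_neg at h
        have h1 := hmax _ hm2A h
        have : 0 < 2 ^ l := Nat.pow_pos (by norm_num)
        omega
      have him : i ≤ m := hmax i hiA (le_of_lt hij)
      exact cross hl hmlt.le hjm2 B hB b0 hb0 (le_trans hb0i him) hjB
  refine ⟨?_, part2⟩
  set T := A.filter (fun x => x ≤ j) with hT
  have hiT : i ∈ T := List.mem_filter.mpr ⟨hiA, by simp [le_of_lt hij]⟩
  obtain ⟨m, hmmax⟩ : ∃ m, T.maximum = some m := by
    cases h : T.maximum with
    | bot =>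
      rw [List.maximum_eq_bot] at h
      rw [h] at hiT
      simp at hiT
    | coe m => exact ⟨m, rfl⟩
  have hmT : m ∈ T := List.maximum_mem hmmax
  have hmA : m ∈ A := (List.mem_filter.mp hmT).1
  have hmj : m ≤ j := by
    have := (List.mem_filter.mp hmT).2
    simpa using this
  have hmax : ∀ m' ∈ A, m' ≤ j → m' ≤ m := by
    intro m' hm'A hm'j
    exact List.le_maximum_of_mem (List.mem_filter.mpr ⟨hm'A, by simpa using hm'j⟩) hmmax
  have him : i ≤ m := hmax i hiA (le_of_lt hij)
  exact ⟨m, hmA, part2 m hmA hmj hmax, him, hmj⟩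
end

section
/- Let e < e' be two common elements of a membership proof path P and an advancement path A (both traversal paths in the sense that each hop from index m has length 2^l with 2^l | m), where P takes maximal greedy hops toward a destination ≥ e' and A is any valid traversal path. If e and e' are consecutive common elements of P and A, then every element of P strictly between e and e' also belongs to A. -/
lemma greedyAux_head (fuel j n : ℕ) : j ∈ greedyAux fuel j n := by
  cases fuel with
  | zero => simp [greedyAux]
  | succ f => rw [greedyAux]; split <;> simp

lemma greedyAux_ge {n : ℕ} : ∀ fuel j x, x ∈ greedyAux fuel j n → j ≤ x := by
  intro fuel
  induction fuel with
  | zero => intro j x hx; simp [greedyAux] at hx; omega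
  | succ f ih =>
    intro j x hx
    rw [greedyAux] at hx
    split at hx
    · rcases List.mem_cons.mp hx with rfl | hx
      · exact le_refl _
      · have := ih _ _ hx
        have : 0 < 2 ^ hopLevel j n := Nat.pow_pos (by norm_num)
        omega
    · simp at hx; omega

lemma greedyAux_pred {n : ℕ} : ∀ fuel j e x, e ∈ greedyAux fuel j n → x ∈ greedyAux fuel j n →
    e < x → ∃ p, p ∈ greedyAux fuel j n ∧ e ≤ p ∧ x = p + 2 ^ hopLevel p n := by
  intro fuel
  induction fuel with
  | zero =>
    intro j e x he hx hlt
    simp [greedyAux] at he hx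
    omega
  | succ f ih =>
    intro j e x he hx hlt
    by_cases hjn : j < n
    · rw [greedyAux, if_pos hjn] at he hx
      rw [greedyAux, if_pos hjn]
      rcases List.mem_cons.mp hx with rfl | hx
      · -- x = j : impossible since e ≥ j
        have h1 : x ≤ e := by
          rcases List.mem_cons.mp he with rfl | he
          · exact le_refl _
          · exact le_trans (Nat.le_add_right _ _) (greedyAux_ge f _ e he)
        omega
      · rcases List.mem_cons.mp he with rfl | he
        · -- e = j
          rcases eq_or_lt_of_le (greedyAux_ge f _ x hx) with heq | hlt2
          · exact ⟨e, List.mem_cons_self, le_refl _, heq.symm⟩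
          · obtain ⟨p, hp, hep, hx2⟩ := ih _ _ _ (greedyAux_head f _ n) hx hlt2
            refine ⟨p, List.mem_cons_of_mem _ hp, ?_, hx2⟩
            exact le_trans (Nat.le_add_right _ _) (greedyAux_ge f _ p hp)
        · obtain ⟨p, hp, hep, hx2⟩ := ih _ _ _ he hx hlt
          exact ⟨p, List.mem_cons_of_mem _ hp, hep, hx2⟩
    · rw [greedyAux, if_neg hjn] at he hx
      simp at he hx
      omega

/-- successor within a path -/
lemma exists_succ (A : List ℕ) : IsPath A → ∀ m e', m ∈ A → e' ∈ A → m < e' →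
    ∃ q, q ∈ A ∧ isHop m q ∧ q ≤ e' := by
  induction A with
  | nil => intro _ m e' hm; simp at hm
  | cons a A ih =>
    intro hA m e' hm he' hlt
    have hlt' : List.Chain' (· < ·) (a :: A) := List.IsChain.imp (fun _ _ h => isHop_lt h) hA
    have hpw : List.Pairwise (· < ·) (a :: A) := List.isChain_iff_pairwise.mp hlt'
    rcases List.mem_cons.mp hm with rfl | hm
    · -- m = a
      have he'A : e' ∈ A := by
        rcases List.mem_cons.mp he' with rfl | h
        · omega
        · exact h
      obtain ⟨b, A', rfl⟩ : ∃ b A', A = b :: A' := by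
        cases A with
        | nil => simp at he'A
        | cons b A' => exact ⟨b, A', rfl⟩
      refine ⟨b, List.mem_cons_of_mem _ (List.mem_cons_self),
        (List.isChain_cons_cons.mp hA).1, ?_⟩
      rcases List.mem_cons.mp he'A with rfl | h
      · exact le_refl _
      · have hpw2 : List.Pairwise (· < ·) (b :: A') := (List.pairwise_cons.mp hpw).2
        exact le_of_lt ((List.pairwise_cons.mp hpw2).1 _ h)
    · have he'A : e' ∈ A := by
        rcases List.mem_cons.mp he' with heq | h
        · have := (List.pairwise_cons.mp hpw).1 _ hm; omega
        · exact h
      obtain ⟨q, hq, h1, h2⟩ := ih (List.IsChain.tail hA) m e' hm he'A hlt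
      exact ⟨q, List.mem_cons_of_mem _ hq, h1, h2⟩

lemma reach (A : List ℕ) (hA : IsPath A) (e' x : ℕ) (he' : e' ∈ A) (hx : x ≤ e') :
    ∀ d m, x - m ≤ d → m ∈ A → m ≤ x →
      (∀ p q, m ≤ p → p < x → isHop p q → q ≤ e' → q ≤ x) → x ∈ A := by
  intro d
  induction d with
  | zero =>
    intro m hd hm hmx _
    have hmx2 : m = x := by omega
    exact hmx2 ▸ hm
  | succ d ih =>
    intro m hd hm hmx hcond
    rcases eq_or_lt_of_le hmx with rfl | hlt
    · exact hm
    · obtain ⟨q, hqA, hhop, hqe'⟩ := exists_succ A hA m e' hm he' (lt_of_lt_of_le hlt hx)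
      have hqx : q ≤ x := hcond m q (le_refl _) hlt hhop hqe'
      have hmq : m < q := isHop_lt hhop
      exact ih q (by omega) hqA hqx (fun p r hp => hcond p r (by omega) )

/-- Common elements of proof and advancement paths: if `e < e'` are consecutive common
elements of the greedy membership-proof path `greedy i n` (with destination `n ≥ e'`) and
a valid traversal path `A`, then every element of the proof path strictly between `e`
and `e'` also belongs to `A`. -/
theorem stmt7 (i n e e' : ℕ) (hi : 0 < i) (A : List ℕ) (hA : IsPath A)
    (heP : e ∈ greedy i n) (he'P : e' ∈ greedy i n)
    (heA : e ∈ A) (he'A : e' ∈ A) (hee' : e < e') (hn : e' ≤ n)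
    (hconsec : ∀ x ∈ greedy i n, x ∈ A → e < x → x < e' → False) :
    ∀ x ∈ greedy i n, e < x → x < e' → x ∈ A := by
  have key : ∀ d x, x - e ≤ d → x ∈ greedy i n → e ≤ x → x ≤ e' → x ∈ A := by
    intro d
    induction d with
    | zero =>
      intro x hd _ hex _
      have : x = e := by omega
      simpa [this] using heA
    | succ d ih =>
      intro x hd hxP hex hxe'
      rcases eq_or_lt_of_le hex with rfl | hlt
      · exact heA
      · obtain ⟨p, hpP, hep, rfl⟩ := greedyAux_pred _ _ _ _ heP hxP hlt
        set L := hopLevel p n with hLdef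
        have hpL : 0 < 2 ^ L := Nat.pow_pos (by norm_num)
        have hpx : p < p + 2 ^ L := by omega
        have hpn : p < n := by omega
        have hspec := hopLevel_spec hpn
        have hpA : p ∈ A := ih p (by omega) hpP hep (by omega)
        apply reach A hA e' (p + 2 ^ L) he'A hxe' (2 ^ L) p (by omega) hpA (by omega)
        intro pk q hpk hpkx hhop hqe'
        obtain ⟨j, hjd, rfl⟩ := hhop
        rcases eq_or_lt_of_le hpk with rfl | hppk
        · -- hop from p itself
          have hj : j ≤ L := hopLevel_max hjd (le_trans hqe' hn)
          have : (2:ℕ) ^ j ≤ 2 ^ L := Nat.pow_le_pow_right (by norm_num) hj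
          omega
        · -- p < pk < p + 2^L
          have hjL : j < L := by
            by_contra h
            push_neg at h
            have h1 : 2 ^ L ∣ pk := dvd_trans (pow_dvd_pow 2 h) hjd
            have h2 : 2 ^ L ∣ pk - p := Nat.dvd_sub h1 hspec.1
            have h3 : 2 ^ L ≤ pk - p := Nat.le_of_dvd (by omega) h2
            omega
          have hjdL : (2:ℕ) ^ j ∣ 2 ^ L := pow_dvd_pow 2 (le_of_lt hjL)
          have hjp : (2:ℕ) ^ j ∣ p := dvd_trans hjdL hspec.1
          have hjt : (2:ℕ) ^ j ∣ pk - p := Nat.dvd_sub hjd hjp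
          have hrem : (2:ℕ) ^ j ∣ 2 ^ L - (pk - p) := Nat.dvd_sub hjdL hjt
          have : (2:ℕ) ^ j ≤ 2 ^ L - (pk - p) := Nat.le_of_dvd (by omega) hrem
          omega
  intro x hxP hex hxe'
  exact key (x - e) x (le_refl _) hxP (le_of_lt hex) (le_of_lt hxe')
end
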